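/- The superalgebra AK(1) with even basis (ε_n)_{n∈ℤ}, odd basis (a_i)_{i∈ℤ+1/2}, and products ε_n·ε_m = ε_{n+m}, ε_n·a_i = (1/2)a_{n+i}, a_i·a_j = (1/2)(j-i)ε_{i+j}, is a Lie antialgebra. -/

import Mathlib

/-!
Send both `ε_n` and `a_{n+1/2}` to the Laurent monomial `tⁿ`. With `D = t d/dt`, the product of
`AK(1)` becomes `(f, g)·(f', g') = (f f' + ½ t (g D g' - D g g'), ½ (f g' + g f'))`, and the
axioms become identities valid for any derivation `D` of a commutative algebra and any `t`:
(LA0), (LA1) and supercommutativity are immediate, the cyclic sum in (LA3) cancels termwise,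
and (LA2) is the Leibniz rule for `D`.
-/

/-- The parity grading on `A × A`: `A × 0` is the even part, `0 × A` the odd part. -/
def evenodd (A : Type*) [AddCommGroup A] [Module ℂ A] (i : ZMod 2) :
    Submodule ℂ (A × A) :=
  if i = 0 then (⊤ : Submodule ℂ A).prod ⊥ else (⊥ : Submodule ℂ A).prod ⊤

/-- The product of `AK(1)`.  The even part has basis `ε_n` (`n ∈ ℤ`), modeled by
`Finsupp.single n 1` in the first component; the odd part has basis `a_i`
(`i ∈ ℤ + 1/2`), where `a_{n+1/2}` is modeled by `Finsupp.single n 1` in the second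
component.  The products are `ε_n·ε_m = ε_{n+m}`, `ε_n·a_i = (1/2)a_{n+i}`,
`a_i·a_j = (1/2)(j-i)ε_{i+j}`. -/
noncomputable def akMul (u v : (ℤ →₀ ℂ) × (ℤ →₀ ℂ)) : (ℤ →₀ ℂ) × (ℤ →₀ ℂ) :=
  (u.1.sum (fun n c => v.1.sum fun m d => Finsupp.single (n + m) (c * d))
     + u.2.sum (fun n c => v.2.sum fun m d =>
         Finsupp.single (n + m + 1) ((1/2 : ℂ) * ((m : ℂ) - (n : ℂ)) * (c * d))),
   u.1.sum (fun n c => v.2.sum fun m d => Finsupp.single (n + m) ((1/2 : ℂ) * (c * d)))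
     + u.2.sum (fun n c => v.1.sum fun m d => Finsupp.single (n + m) ((1/2 : ℂ) * (c * d))))

namespace AddMonoidAlgebra

variable {k M : Type*}

theorem apply₂_eq_sum_sum [CommSemiring k] {N : Type*} [AddCommMonoid N] [Module k N]
    (B : k[M] →ₗ[k] k[M] →ₗ[k] N) (x y : k[M]) :
    B x y = x.coeff.sum fun m c => y.coeff.sum fun n d => B (single m c) (single n d) := by
  conv_lhs => rw [← sum_coeff_single x, ← sum_coeff_single y]
  simp only [map_finsuppSum, LinearMap.finsupp_sum_apply]
  exact Finsupp.sum_comm ..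

theorem coeff_mul_eq_sum_sum [Semiring k] [Add M] (x y : k[M]) :
    (x * y).coeff = x.coeff.sum fun m c => y.coeff.sum fun n d => Finsupp.single (m + n) (c * d) := by
  rw [mul_def]
  simp only [coeff_finsuppSum, coeff_single]

theorem coeff_smul_mul_eq_sum_sum [CommSemiring k] [Add M] (r : k) (x y : k[M]) :
    (r • (x * y)).coeff =
      x.coeff.sum fun m c => y.coeff.sum fun n d => Finsupp.single (m + n) (r * (c * d)) := by
  simp only [coeff_smul, coeff_mul_eq_sum_sum, Finsupp.smul_sum, Finsupp.smul_single, smul_eq_mul]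

variable [CommRing k] [AddCommMonoid M]

noncomputable def degreeDerivation (φ : M →+ k) : Derivation k k[M] k[M] := by
  refine Derivation.mk' (Finsupp.linearCombination k (fun m => single m (φ m)) ∘ₗ
      (coeffLinearEquiv k : k[M] ≃ₗ[k] M →₀ k).toLinearMap) fun x y => ?_
  induction x using induction_linear with
  | zero => simp
  | add x x' hx hx' => rw [add_mul, map_add, hx, hx', map_add, add_smul, smul_add]; abel
  | single m c =>
    induction y using induction_linear with
    | zero => simp
    | add y y' hy hy' => rw [mul_add, map_add, hy, hy', map_add, add_smul, smul_add]; abel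
    | single n d =>
      simp only [LinearMap.coe_comp, Function.comp_apply, LinearEquiv.coe_coe, single_mul_single,
        coeffLinearEquiv_apply, coeff_single, Finsupp.linearCombination_single, smul_single,
        smul_eq_mul, add_comm n m, ← single_add, map_add]
      ring_nf

theorem degreeDerivation_single (φ : M →+ k) (m : M) (c : k) :
    degreeDerivation φ (single m c) = single m (φ m * c) := by
  simp [degreeDerivation, mul_comm]

end AddMonoidAlgebra

section LieAntialgebra

variable {k R : Type*} [Field k] [CommRing R] [Algebra k R] (D : Derivation k R R) (t : R)

def oddBracket : R →ₗ[k] R →ₗ[k] R :=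
  LinearMap.mk₂ k (fun x y => t * (x * D y - D x * y))
    (fun x x' y => by simp only [map_add]; ring)
    (fun c x y => by rw [D.map_smul]; simp only [Algebra.smul_def]; ring)
    (fun x y y' => by simp only [map_add]; ring)
    (fun c x y => by rw [D.map_smul]; simp only [Algebra.smul_def]; ring)

@[simp]
theorem oddBracket_apply (x y : R) : oddBracket D t x y = t * (x * D y - D x * y) := rfl

def antiMul (u v : R × R) : R × R :=
  (u.1 * v.1 + (2⁻¹ : k) • oddBracket D t u.2 v.2, (2⁻¹ : k) • (u.1 * v.2 + u.2 * v.1))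

theorem antiMul_even_comm (a : R) (v : R × R) : antiMul D t (a, 0) v = antiMul D t v (a, 0) := by
  simp [antiMul, mul_comm, add_comm]

theorem antiMul_odd_anticomm (b c : R) :
    antiMul D t (0, b) (0, c) = -antiMul D t (0, c) (0, b) := by
  simp only [antiMul, oddBracket_apply, Algebra.smul_def, Prod.neg_mk]
  congr 1 <;> ring

theorem antiMul_even_assoc (a b c : R) :
    antiMul D t (a, 0) (antiMul D t (b, 0) (c, 0)) =
      antiMul D t (antiMul D t (a, 0) (b, 0)) (c, 0) := by
  simp [antiMul, mul_assoc]

theorem antiMul_even_even_odd (a b c : R) :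
    antiMul D t (a, 0) (antiMul D t (b, 0) (0, c)) =
      (2⁻¹ : k) • antiMul D t (antiMul D t (a, 0) (b, 0)) (0, c) := by
  simp [antiMul, mul_assoc]

theorem antiMul_even_derivation [NeZero (2 : k)] (a b c : R) :
    antiMul D t (a, 0) (antiMul D t (0, b) (0, c)) =
      antiMul D t (antiMul D t (a, 0) (0, b)) (0, c) +
        antiMul D t (0, b) (antiMul D t (a, 0) (0, c)) := by
  have h : algebraMap k R 2⁻¹ * 2 = 1 := by
    rw [← map_ofNat (algebraMap k R), ← map_mul, inv_mul_cancel₀ two_ne_zero, map_one]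
  refine Prod.ext ?_ (by simp [antiMul])
  simp only [antiMul, oddBracket_apply, mul_zero, zero_mul, add_zero, zero_add, map_zero,
    LinearMap.zero_apply, Derivation.map_smul, Derivation.leibniz, smul_eq_mul, Prod.fst_add]
  simp only [Algebra.smul_def]
  linear_combination (-t * a * (b * D c - D b * c) * algebraMap k R 2⁻¹) * h

theorem antiMul_odd_cyclic (a b c : R) :
    antiMul D t (0, a) (antiMul D t (0, b) (0, c)) + antiMul D t (0, b) (antiMul D t (0, c) (0, a))
      + antiMul D t (0, c) (antiMul D t (0, a) (0, b)) = 0 := by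
  simp only [antiMul, oddBracket_apply, Algebra.smul_def, mul_zero, zero_mul, zero_add, add_zero,
    map_zero, Prod.mk_add_mk, Prod.mk_eq_zero, true_and]
  ring

end LieAntialgebra

theorem ZMod.two_eq_zero_or_one (i : ZMod 2) : i = 0 ∨ i = 1 := by
  revert i; decide

theorem mem_evenodd_zero {A : Type*} [AddCommGroup A] [Module ℂ A] {u : A × A} :
    u ∈ evenodd A 0 ↔ u.2 = 0 := by
  simp [evenodd, Submodule.mem_prod]

theorem mem_evenodd_one {A : Type*} [AddCommGroup A] [Module ℂ A] {u : A × A} :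
    u ∈ evenodd A 1 ↔ u.1 = 0 := by
  simp [evenodd, Submodule.mem_prod]

namespace AK

open AddMonoidAlgebra

noncomputable abbrev D : Derivation ℂ ℂ[ℤ] ℂ[ℤ] := degreeDerivation (Int.castAddHom ℂ)

noncomputable abbrev t : ℂ[ℤ] := LaurentPolynomial.T 1

noncomputable def coeffPair : (ℂ[ℤ] × ℂ[ℤ]) ≃ₗ[ℂ] (ℤ →₀ ℂ) × (ℤ →₀ ℂ) :=
  (coeffLinearEquiv ℂ).prodCongr (coeffLinearEquiv ℂ)

theorem coeff_half_oddBracket (x y : ℂ[ℤ]) :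
    ((2⁻¹ : ℂ) • oddBracket D t x y).coeff = x.coeff.sum fun n c => y.coeff.sum fun m d =>
      Finsupp.single (n + m + 1) ((2⁻¹ : ℂ) * ((m : ℂ) - (n : ℂ)) * (c * d)) := by
  rw [← LinearMap.smul_apply, ← LinearMap.smul_apply, apply₂_eq_sum_sum]
  simp only [coeff_finsuppSum, LinearMap.smul_apply, oddBracket_apply, degreeDerivation_single, t,
    LaurentPolynomial.T, single_mul_single, ← single_sub, smul_single', coeff_single]
  refine Finsupp.sum_congr fun n _ => Finsupp.sum_congr fun m _ => ?_
  rw [add_comm 1, Int.coe_castAddHom]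
  congr 1
  ring

theorem akMul_coeffPair (x y : ℂ[ℤ] × ℂ[ℤ]) :
    akMul (coeffPair x) (coeffPair y) = coeffPair (antiMul D t x y) := by
  obtain ⟨x₁, x₂⟩ := x
  obtain ⟨y₁, y₂⟩ := y
  simp only [akMul, coeffPair, antiMul, LinearEquiv.prodCongr_apply, coeffLinearEquiv_apply,
    one_div, smul_add, coeff_add, coeff_mul_eq_sum_sum, coeff_half_oddBracket,
    coeff_smul_mul_eq_sum_sum]

theorem exists_eq_coeffPair_even {u : (ℤ →₀ ℂ) × (ℤ →₀ ℂ)} (hu : u ∈ evenodd (ℤ →₀ ℂ) 0) :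
    ∃ a, u = coeffPair (a, 0) :=
  ⟨ofCoeff u.1, Prod.ext rfl (by simpa [coeffPair] using mem_evenodd_zero.1 hu)⟩

theorem exists_eq_coeffPair_odd {u : (ℤ →₀ ℂ) × (ℤ →₀ ℂ)} (hu : u ∈ evenodd (ℤ →₀ ℂ) 1) :
    ∃ b, u = coeffPair (0, b) :=
  ⟨ofCoeff u.2, Prod.ext (by simpa [coeffPair] using mem_evenodd_one.1 hu) rfl⟩

theorem akMul_mem_evenodd {i j : ZMod 2} {u v : (ℤ →₀ ℂ) × (ℤ →₀ ℂ)}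
    (hu : u ∈ evenodd (ℤ →₀ ℂ) i) (hv : v ∈ evenodd (ℤ →₀ ℂ) j) :
    akMul u v ∈ evenodd (ℤ →₀ ℂ) (i + j) := by
  obtain rfl | rfl := ZMod.two_eq_zero_or_one i <;> obtain rfl | rfl := ZMod.two_eq_zero_or_one j <;>
    simp_all [mem_evenodd_zero, mem_evenodd_one, akMul, show (1 + 1 : ZMod 2) = 0 from rfl]

theorem akMul_supercomm {i j : ZMod 2} {u v : (ℤ →₀ ℂ) × (ℤ →₀ ℂ)}
    (hu : u ∈ evenodd (ℤ →₀ ℂ) i) (hv : v ∈ evenodd (ℤ →₀ ℂ) j) :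
    akMul u v = ((-1 : ℂ) ^ (i.val * j.val)) • akMul v u := by
  obtain rfl | rfl := ZMod.two_eq_zero_or_one i
  · obtain ⟨a, rfl⟩ := exists_eq_coeffPair_even hu
    obtain ⟨v, rfl⟩ := coeffPair.surjective v
    rw [akMul_coeffPair, akMul_coeffPair, antiMul_even_comm]
    simp
  obtain rfl | rfl := ZMod.two_eq_zero_or_one j
  · obtain ⟨u, rfl⟩ := coeffPair.surjective u
    obtain ⟨a, rfl⟩ := exists_eq_coeffPair_even hv
    rw [akMul_coeffPair, akMul_coeffPair, antiMul_even_comm]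
    simp
  · obtain ⟨a, rfl⟩ := exists_eq_coeffPair_odd hu
    obtain ⟨b, rfl⟩ := exists_eq_coeffPair_odd hv
    rw [akMul_coeffPair, akMul_coeffPair, antiMul_odd_anticomm, map_neg, ZMod.val_one, mul_one,
      pow_one]
    exact (neg_one_smul ℂ (coeffPair (antiMul D t (0, b) (0, a)))).symm

theorem akMul_even_assoc {x₁ x₂ x₃ : (ℤ →₀ ℂ) × (ℤ →₀ ℂ)} (h₁ : x₁ ∈ evenodd (ℤ →₀ ℂ) 0)
    (h₂ : x₂ ∈ evenodd (ℤ →₀ ℂ) 0) (h₃ : x₃ ∈ evenodd (ℤ →₀ ℂ) 0) :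
    akMul x₁ (akMul x₂ x₃) = akMul (akMul x₁ x₂) x₃ := by
  obtain ⟨a, rfl⟩ := exists_eq_coeffPair_even h₁
  obtain ⟨b, rfl⟩ := exists_eq_coeffPair_even h₂
  obtain ⟨c, rfl⟩ := exists_eq_coeffPair_even h₃
  simp only [akMul_coeffPair, antiMul_even_assoc]

theorem akMul_even_even_odd {x₁ x₂ y : (ℤ →₀ ℂ) × (ℤ →₀ ℂ)} (h₁ : x₁ ∈ evenodd (ℤ →₀ ℂ) 0)
    (h₂ : x₂ ∈ evenodd (ℤ →₀ ℂ) 0) (hy : y ∈ evenodd (ℤ →₀ ℂ) 1) :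
    akMul x₁ (akMul x₂ y) = (1/2 : ℂ) • akMul (akMul x₁ x₂) y := by
  obtain ⟨a, rfl⟩ := exists_eq_coeffPair_even h₁
  obtain ⟨b, rfl⟩ := exists_eq_coeffPair_even h₂
  obtain ⟨c, rfl⟩ := exists_eq_coeffPair_odd hy
  simp only [akMul_coeffPair, antiMul_even_even_odd, one_div, map_smul]

theorem akMul_even_derivation {x y₁ y₂ : (ℤ →₀ ℂ) × (ℤ →₀ ℂ)} (hx : x ∈ evenodd (ℤ →₀ ℂ) 0)
    (h₁ : y₁ ∈ evenodd (ℤ →₀ ℂ) 1) (h₂ : y₂ ∈ evenodd (ℤ →₀ ℂ) 1) :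
    akMul x (akMul y₁ y₂) = akMul (akMul x y₁) y₂ + akMul y₁ (akMul x y₂) := by
  obtain ⟨a, rfl⟩ := exists_eq_coeffPair_even hx
  obtain ⟨b, rfl⟩ := exists_eq_coeffPair_odd h₁
  obtain ⟨c, rfl⟩ := exists_eq_coeffPair_odd h₂
  simp only [akMul_coeffPair, ← map_add, antiMul_even_derivation]

theorem akMul_odd_cyclic {y₁ y₂ y₃ : (ℤ →₀ ℂ) × (ℤ →₀ ℂ)} (h₁ : y₁ ∈ evenodd (ℤ →₀ ℂ) 1)
    (h₂ : y₂ ∈ evenodd (ℤ →₀ ℂ) 1) (h₃ : y₃ ∈ evenodd (ℤ →₀ ℂ) 1) :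
    akMul y₁ (akMul y₂ y₃) + akMul y₂ (akMul y₃ y₁) + akMul y₃ (akMul y₁ y₂) = 0 := by
  obtain ⟨a, rfl⟩ := exists_eq_coeffPair_odd h₁
  obtain ⟨b, rfl⟩ := exists_eq_coeffPair_odd h₂
  obtain ⟨c, rfl⟩ := exists_eq_coeffPair_odd h₃
  simp only [akMul_coeffPair, ← map_add, antiMul_odd_cyclic, map_zero]

end AK

/-- `AK(1)` is a Lie antialgebra: its product respects the grading, is
supercommutative, and satisfies (LA0)-(LA3). -/
theorem stmt_4 :
    (∀ (i j : ZMod 2) (u v : (ℤ →₀ ℂ) × (ℤ →₀ ℂ)),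
        u ∈ evenodd (ℤ →₀ ℂ) i → v ∈ evenodd (ℤ →₀ ℂ) j →
        akMul u v ∈ evenodd (ℤ →₀ ℂ) (i + j)) ∧
    (∀ (i j : ZMod 2) (u v : (ℤ →₀ ℂ) × (ℤ →₀ ℂ)),
        u ∈ evenodd (ℤ →₀ ℂ) i → v ∈ evenodd (ℤ →₀ ℂ) j →
        akMul u v = ((-1 : ℂ) ^ (i.val * j.val)) • akMul v u) ∧
    (∀ x1 x2 x3, x1 ∈ evenodd (ℤ →₀ ℂ) 0 → x2 ∈ evenodd (ℤ →₀ ℂ) 0 →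
        x3 ∈ evenodd (ℤ →₀ ℂ) 0 →
        akMul x1 (akMul x2 x3) = akMul (akMul x1 x2) x3) ∧
    (∀ x1 x2 y, x1 ∈ evenodd (ℤ →₀ ℂ) 0 → x2 ∈ evenodd (ℤ →₀ ℂ) 0 →
        y ∈ evenodd (ℤ →₀ ℂ) 1 →
        akMul x1 (akMul x2 y) = (1/2 : ℂ) • akMul (akMul x1 x2) y) ∧
    (∀ x y1 y2, x ∈ evenodd (ℤ →₀ ℂ) 0 → y1 ∈ evenodd (ℤ →₀ ℂ) 1 →
        y2 ∈ evenodd (ℤ →₀ ℂ) 1 →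
        akMul x (akMul y1 y2) = akMul (akMul x y1) y2 + akMul y1 (akMul x y2)) ∧
    (∀ y1 y2 y3, y1 ∈ evenodd (ℤ →₀ ℂ) 1 → y2 ∈ evenodd (ℤ →₀ ℂ) 1 →
        y3 ∈ evenodd (ℤ →₀ ℂ) 1 →
        akMul y1 (akMul y2 y3) + akMul y2 (akMul y3 y1) + akMul y3 (akMul y1 y2) = 0) :=
  ⟨fun _ _ _ _ => AK.akMul_mem_evenodd, fun _ _ _ _ => AK.akMul_supercomm,
    fun _ _ _ => AK.akMul_even_assoc, fun _ _ _ => AK.akMul_even_even_odd,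
    fun _ _ _ => AK.akMul_even_derivation, fun _ _ _ => AK.akMul_odd_cyclic⟩
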